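/- Let d ≥ 2 be an integer and ρ > 0. Define the strip W_ρ = {(ω₁, ω₂) ∈ ℝ^{2d} : |ω₁ − ω₂| ≤ ρ}, where points of ℝ^{2d} are written as (ω₁, ω₂) with ω₁, ω₂ ∈ ℝ^d. Then the (2d−1)-dimensional Hausdorff measure of 𝕊₁^{2d-1} ∩ W_ρ is at most C min{1, ρ^{(d-1)/2}} for a constant C > 0 depending only on d. -/

import Mathlib

open MeasureTheory

/-- First component `ω₁` of a point of ℝ^{2d} = ℝ^d × ℝ^d. -/
noncomputable def projL {d : ℕ} (p : EuclideanSpace ℝ (Fin d ⊕ Fin d)) :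
    EuclideanSpace ℝ (Fin d) := WithLp.toLp 2 (fun i => p (Sum.inl i))

/-- Second component `ω₂` of a point of ℝ^{2d} = ℝ^d × ℝ^d. -/
noncomputable def projR {d : ℕ} (p : EuclideanSpace ℝ (Fin d ⊕ Fin d)) :
    EuclideanSpace ℝ (Fin d) := WithLp.toLp 2 (fun i => p (Sum.inr i))

/-!
In the coordinates `u = (ω₁ - ω₂) / √2`, `v = (ω₁ + ω₂) / √2` (a rotation of `ℝ^{2d}`) the band
becomes `{|u| ≤ ρ / √2}`, a neighbourhood of the great `(d - 1)`-sphere `{u = 0}` of width `ρ` in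
`d` normal directions. For `ρ ≤ 1` its points have `|v|² ≥ 1 / 2`, so some `v_j` has
`|v_j|² ≥ 1 / (4d)`, and the point is the radial projection of its rescaling to the hyperplane
`{v_j = ±1}`. That rescaled point lies in a box with `d` sides of length `O(ρ)` and `d - 1` sides
of length `O(1)`, and radial projection is `2`-Lipschitz outside the unit ball, so the band has
measure `O(ρ^d) ≤ O(ρ^{(d-1)/2})`. For `ρ > 1` the same covering, by the hyperplanes
`{x_j = ±1}` for all coordinates `j`, shows that the whole sphere has finite measure.
-/

open Set Metric
open scoped ENNReal NNReal

theorem lipschitzOnWith_inv_norm_smul {E : Type*} [NormedAddCommGroup E] [NormedSpace ℝ E]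
    {r : ℝ≥0} (hr : 0 < r) :
    LipschitzOnWith (2 / r) (fun x : E => ‖x‖⁻¹ • x) {x | (r : ℝ) ≤ ‖x‖} := by
  refine LipschitzOnWith.of_dist_le_mul fun x hx y _ => ?_
  have hx0 : 0 < ‖x‖ := lt_of_lt_of_le hr hx
  have hy : ‖(‖x‖⁻¹ - ‖y‖⁻¹) • y‖ ≤ ‖x‖⁻¹ * ‖x - y‖ := by
    rcases eq_or_ne y 0 with rfl | hy0
    · simp only [sub_zero, smul_zero, norm_zero]; positivity
    have hscale : (‖x‖⁻¹ - ‖y‖⁻¹) * ‖y‖ = ‖x‖⁻¹ * (‖y‖ - ‖x‖) := by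
      field_simp [norm_ne_zero_iff.2 hy0]
    rw [norm_smul, Real.norm_eq_abs, ← abs_norm y, ← abs_mul, abs_norm, hscale, abs_mul,
      abs_of_pos (inv_pos.2 hx0), norm_sub_rev]
    gcongr
    exact abs_norm_sub_norm_le y x
  calc dist (‖x‖⁻¹ • x) (‖y‖⁻¹ • y) = ‖‖x‖⁻¹ • (x - y) + (‖x‖⁻¹ - ‖y‖⁻¹) • y‖ := by
        rw [dist_eq_norm, smul_sub, sub_smul]; abel_nf
    _ ≤ 2 * ‖x‖⁻¹ * dist x y := by
        rw [dist_eq_norm, two_mul, add_mul]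
        refine (norm_add_le _ _).trans (add_le_add ?_ hy)
        rw [norm_smul, norm_inv, norm_norm]
    _ ≤ (2 / r : ℝ≥0) * dist x y := by
        rw [NNReal.coe_div, div_eq_mul_inv]; push_cast
        gcongr
        exact hx

section FaceChart

variable {κ : Type*} [Fintype κ] [DecidableEq κ]

/-- Radial projection to the sphere of the hyperplane `{x | x j = ε}`, in the coordinates `x k`,
`k ≠ j`. -/
noncomputable def faceChart (j : κ) (ε : ℝ) : ({k // k ≠ j} → ℝ) → EuclideanSpace ℝ κ :=
  (fun x => ‖x‖⁻¹ • x) ∘ WithLp.toLp 2 ∘ fun y => (Equiv.funSplitAt j ℝ).symm (ε, y)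

theorem lipschitzWith_funSplitAt_symm (j : κ) (ε : ℝ) :
    LipschitzWith 1 fun y : {k // k ≠ j} → ℝ => (Equiv.funSplitAt j ℝ).symm (ε, y) := by
  refine LipschitzWith.of_dist_le_mul fun y y' => ?_
  rw [NNReal.coe_one, one_mul, dist_pi_le_iff dist_nonneg]
  intro k
  by_cases hk : k = j
  · simp [Equiv.funSplitAt_symm_apply, hk]
  · simpa [Equiv.funSplitAt_symm_apply, hk] using dist_le_pi_dist y y' ⟨k, hk⟩

theorem lipschitzWith_faceChart (j : κ) {ε : ℝ} (hε : |ε| = 1) :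
    LipschitzWith (2 * NNReal.sqrt (Fintype.card κ)) (faceChart j ε) := by
  have htoLp : LipschitzWith (NNReal.sqrt (Fintype.card κ)) (WithLp.toLp 2 : (κ → ℝ) → _) := by
    simpa [NNReal.sqrt_eq_rpow] using PiLp.lipschitzWith_toLp 2 fun _ : κ => ℝ
  have hmaps : MapsTo (WithLp.toLp 2 ∘ fun y => (Equiv.funSplitAt j ℝ).symm (ε, y)) univ
      {x : EuclideanSpace ℝ κ | ((1 : ℝ≥0) : ℝ) ≤ ‖x‖} := fun y _ => by
    simpa [Equiv.funSplitAt_symm_apply, hε] using PiLp.norm_apply_le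
      (WithLp.toLp 2 ((Equiv.funSplitAt j ℝ).symm (ε, y))) j
  rw [← lipschitzOnWith_univ]
  convert (lipschitzOnWith_inv_norm_smul one_pos).comp
    ((htoLp.comp (lipschitzWith_funSplitAt_symm j ε)).lipschitzOnWith) hmaps using 1
  · rfl
  · rw [div_one, mul_one]
  · rfl

theorem hausdorffMeasure_faceChart_image_le (j : κ) {ε : ℝ} (hε : |ε| = 1)
    (B : Set ({k // k ≠ j} → ℝ)) :
    μH[(Fintype.card κ : ℝ) - 1] (faceChart j ε '' B) ≤
      ((2 * NNReal.sqrt (Fintype.card κ)) ^ ((Fintype.card κ : ℝ) - 1) : ℝ≥0) * volume B := by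
  have : Nonempty κ := ⟨j⟩
  have hcard : (Fintype.card {k // k ≠ j} : ℝ) = Fintype.card κ - 1 := by
    rw [Fintype.card_subtype_compl, Fintype.card_subtype_eq,
      Nat.cast_sub Fintype.card_pos, Nat.cast_one]
  have hL : 2 * NNReal.sqrt (Fintype.card κ) ≠ 0 := by simp
  rw [ENNReal.coe_rpow_of_ne_zero hL, ← hausdorffMeasure_pi_real, ← hcard]
  exact (lipschitzWith_faceChart j hε).hausdorffMeasure_image_le (Nat.cast_nonneg _) B

theorem faceChart_div_abs_eq_self (j : κ) {p : EuclideanSpace ℝ κ} (hp : ‖p‖ = 1)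
    (hpj : p j ≠ 0) :
    faceChart j (p j / |p j|) (fun k => p k / |p j|) = p := by
  have hscale : WithLp.toLp 2 ((Equiv.funSplitAt j ℝ).symm (p j / |p j|, fun k => p k / |p j|))
      = |p j|⁻¹ • p := by
    ext k
    by_cases hk : k = j
    · subst hk; simp [Equiv.funSplitAt_symm_apply, div_eq_inv_mul]
    · simp [Equiv.funSplitAt_symm_apply, hk, div_eq_inv_mul]
  simp only [faceChart, Function.comp_apply, hscale, norm_smul, norm_inv, Real.norm_eq_abs,
    abs_abs, hp, mul_one, inv_inv, smul_smul, mul_inv_cancel₀ (abs_ne_zero.2 hpj), one_smul]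

theorem subset_iUnion_faceChart (J : Finset κ) (R : κ → ℝ) {S : Set (EuclideanSpace ℝ κ)}
    (hS : S ⊆ sphere 0 1) (hJ : ∀ p ∈ S, 1 / 2 ≤ ∑ j ∈ J, p j ^ 2)
    (hR : ∀ p ∈ S, ∀ k, |p k| ≤ R k) :
    S ⊆ ⋃ j ∈ J, ⋃ ε ∈ ({-1, 1} : Finset ℝ), faceChart j ε '' univ.pi fun k : {k // k ≠ j} =>
      Icc (-(2 * Fintype.card κ * R k)) (2 * Fintype.card κ * R k) := by
  intro p hpS
  set n : ℝ := (Fintype.card κ : ℝ)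
  have hp : ‖p‖ = 1 := by simpa using hS hpS
  have hJne : J.Nonempty := by
    by_contra h
    have := hJ p hpS
    simp [Finset.not_nonempty_iff_eq_empty.1 h] at this
    linarith
  have hn : 0 < n := by
    obtain ⟨j, -⟩ := hJne
    exact Nat.cast_pos.2 (Fintype.card_pos_iff.2 ⟨j⟩)
  -- pigeonhole: some coordinate in `J` carries a share `1 / (2n)` of the mass
  obtain ⟨j, hjJ, hj⟩ : ∃ j ∈ J, 1 / (2 * n) ≤ p j ^ 2 := by
    refine Finset.exists_le_of_sum_le hJne ((hJ p hpS).trans' ?_)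
    rw [Finset.sum_const, nsmul_eq_mul, mul_one_div, div_le_div_iff₀ (by positivity) two_pos]
    have : (J.card : ℝ) ≤ n := Nat.cast_le.2 (Finset.card_le_univ J)
    linarith
  have hpj1 : |p j| ≤ 1 := by simpa [hp] using PiLp.norm_apply_le p j
  have hpj : 1 / (2 * n) ≤ |p j| := by
    refine hj.trans ?_
    rw [← sq_abs]
    nlinarith [abs_nonneg (p j)]
  have hpj0 : 0 < |p j| := lt_of_lt_of_le (by positivity) hpj
  refine mem_biUnion hjJ (mem_biUnion (x := p j / |p j|) ?_ ⟨fun k => p k / |p j|, ?_,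
    faceChart_div_abs_eq_self j hp (abs_pos.1 hpj0)⟩)
  · have hε : |(p j / |p j|)| = 1 := by rw [abs_div, abs_abs, div_self hpj0.ne']
    rcases (abs_eq zero_le_one).1 hε with h | h <;> simp [h]
  · intro k _
    have hRk : 0 ≤ R k := (abs_nonneg _).trans (hR p hpS k)
    have hscale : 1 ≤ 2 * n * |p j| := by rwa [div_le_iff₀ (by positivity), mul_comm] at hpj
    rw [mem_Icc, ← abs_le, abs_div, abs_abs, div_le_iff₀ hpj0]
    calc |p k| ≤ R k := hR p hpS k
      _ ≤ R k * (2 * n * |p j|) := le_mul_of_one_le_right hRk hscale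
      _ = 2 * n * R k * |p j| := by ring

theorem volume_pi_Icc_subtype_ne (j : κ) {c : ℝ} (hc : 0 ≤ c) (R : κ → ℝ) :
    volume (univ.pi fun k : {k // k ≠ j} => Icc (-(c * R k)) (c * R k)) =
      ENNReal.ofReal (2 * c) ^ (Fintype.card κ - 1) *
        ∏ k ∈ Finset.univ.erase j, ENNReal.ofReal (R k) := by
  calc volume (univ.pi fun k : {k // k ≠ j} => Icc (-(c * R k)) (c * R k))
      = ∏ k : {k // k ≠ j}, ENNReal.ofReal (2 * c) * ENNReal.ofReal (R k) := by
        rw [volume_pi_pi]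
        refine Finset.prod_congr rfl fun k _ => ?_
        rw [Real.volume_Icc, ← ENNReal.ofReal_mul (by positivity)]
        ring_nf
    _ = ∏ k ∈ Finset.univ.erase j, ENNReal.ofReal (2 * c) * ENNReal.ofReal (R k) :=
        (Finset.prod_subtype (p := (· ≠ j)) (Finset.univ.erase j) (fun _ => by simp)
          fun k => ENNReal.ofReal (2 * c) * ENNReal.ofReal (R k)).symm
    _ = _ := by
        rw [Finset.prod_mul_distrib, Finset.prod_const,
          Finset.card_erase_of_mem (Finset.mem_univ j), Finset.card_univ]

theorem exists_hausdorffMeasure_le_of_subset_sphere :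
    ∃ K : ℝ≥0, ∀ (J : Finset κ) (R : κ → ℝ) (S : Set (EuclideanSpace ℝ κ)), S ⊆ sphere 0 1 →
      (∀ p ∈ S, 1 / 2 ≤ ∑ j ∈ J, p j ^ 2) → (∀ p ∈ S, ∀ k, |p k| ≤ R k) →
      μH[(Fintype.card κ : ℝ) - 1] S ≤
        K * ∑ j ∈ J, ∏ k ∈ Finset.univ.erase j, ENNReal.ofReal (R k) := by
  set n := Fintype.card κ
  set L : ℝ≥0 := (2 * NNReal.sqrt n) ^ ((n : ℝ) - 1)
  refine ⟨2 * L * (4 * n) ^ (n - 1), fun J R S hS hJ hR => ?_⟩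
  set box : ∀ j : κ, Set ({k // k ≠ j} → ℝ) := fun j =>
    univ.pi fun k => Icc (-(2 * n * R k)) (2 * n * R k)
  have hchart : ∀ j ε, ε ∈ ({-1, 1} : Finset ℝ) →
      μH[(n : ℝ) - 1] (faceChart j ε '' box j) ≤
        L * ((4 * n) ^ (n - 1) * ∏ k ∈ Finset.univ.erase j, ENNReal.ofReal (R k)) := by
    intro j ε hε
    have hε : |ε| = 1 := by rcases Finset.mem_insert.1 hε with rfl | hε <;> simp_all
    refine (hausdorffMeasure_faceChart_image_le j hε _).trans_eq ?_
    rw [volume_pi_Icc_subtype_ne j (by positivity)]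
    norm_num [n, L, ← mul_assoc, ENNReal.ofReal_mul]
  calc μH[(n : ℝ) - 1] S
      ≤ μH[(n : ℝ) - 1] (⋃ j ∈ J, ⋃ ε ∈ ({-1, 1} : Finset ℝ), faceChart j ε '' box j) :=
        measure_mono (subset_iUnion_faceChart J R hS hJ hR)
    _ ≤ ∑ j ∈ J, ∑ ε ∈ ({-1, 1} : Finset ℝ), μH[(n : ℝ) - 1] (faceChart j ε '' box j) :=
        (measure_biUnion_finset_le _ _).trans
          (Finset.sum_le_sum fun _ _ => measure_biUnion_finset_le _ _)
    _ ≤ ∑ j ∈ J, ∑ ε ∈ ({-1, 1} : Finset ℝ),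
          L * ((4 * n) ^ (n - 1) * ∏ k ∈ Finset.univ.erase j, ENNReal.ofReal (R k)) :=
        Finset.sum_le_sum fun j _ => Finset.sum_le_sum fun ε hε => hchart j ε hε
    _ = _ := by
        simp only [Finset.sum_const, Finset.card_pair (by norm_num : (-1 : ℝ) ≠ 1), nsmul_eq_mul,
          Finset.mul_sum]
        push_cast
        exact Finset.sum_congr rfl fun _ _ => by ring

end FaceChart

section Rotation

variable {ι : Type*}

noncomputable def diffSumRotation (p : EuclideanSpace ℝ (ι ⊕ ι)) : EuclideanSpace ℝ (ι ⊕ ι) :=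
  WithLp.toLp 2 <| Sum.elim (fun i => (p (.inl i) - p (.inr i)) / √2)
    fun i => (p (.inl i) + p (.inr i)) / √2

theorem sum_sq_diffSumRotation (p : EuclideanSpace ℝ (ι ⊕ ι)) (i : ι) :
    diffSumRotation p (.inl i) ^ 2 + diffSumRotation p (.inr i) ^ 2 =
      p (.inl i) ^ 2 + p (.inr i) ^ 2 := by
  simp only [diffSumRotation, PiLp.toLp_apply, Sum.elim_inl, Sum.elim_inr, div_pow,
    Real.sq_sqrt zero_le_two]
  ring

theorem norm_diffSumRotation [Fintype ι] (p : EuclideanSpace ℝ (ι ⊕ ι)) :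
    ‖diffSumRotation p‖ = ‖p‖ := by
  rw [← sq_eq_sq₀ (norm_nonneg _) (norm_nonneg _), EuclideanSpace.real_norm_sq_eq,
    EuclideanSpace.real_norm_sq_eq, Fintype.sum_sum_type, Fintype.sum_sum_type,
    ← Finset.sum_add_distrib, ← Finset.sum_add_distrib]
  exact Finset.sum_congr rfl fun i _ => sum_sq_diffSumRotation p i

theorem isometry_diffSumRotation [Fintype ι] : Isometry (diffSumRotation (ι := ι)) := by
  refine Isometry.of_dist_eq fun p q => ?_
  have hsub : diffSumRotation p - diffSumRotation q = diffSumRotation (p - q) := by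
    ext (i | i) <;> simp only [diffSumRotation, PiLp.sub_apply, PiLp.toLp_apply, Sum.elim_inl,
      Sum.elim_inr] <;> ring
  rw [dist_eq_norm, dist_eq_norm, hsub, norm_diffSumRotation]

end Rotation

theorem sum_sq_diffSumRotation_inl {d : ℕ} (p : EuclideanSpace ℝ (Fin d ⊕ Fin d)) :
    ∑ i, diffSumRotation p (.inl i) ^ 2 = ‖projL p - projR p‖ ^ 2 / 2 := by
  simp only [EuclideanSpace.real_norm_sq_eq, Finset.sum_div, diffSumRotation, projL, projR,
    PiLp.sub_apply, PiLp.toLp_apply, Sum.elim_inl, div_pow, Real.sq_sqrt zero_le_two]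

theorem diffSumRotation_band_bounds {d : ℕ} {ρ : ℝ} (hρ : 0 < ρ) (hρ1 : ρ ≤ 1)
    {p : EuclideanSpace ℝ (Fin d ⊕ Fin d)} (hp : ‖p‖ = 1) (hpρ : ‖projL p - projR p‖ ≤ ρ) :
    1 / 2 ≤ ∑ i, diffSumRotation p (.inr i) ^ 2 ∧
      ∀ k, |diffSumRotation p k| ≤ Sum.elim (fun _ => ρ) (fun _ => 1) k := by
  have hinl : ∑ i, diffSumRotation p (.inl i) ^ 2 ≤ ρ ^ 2 / 2 := by
    rw [sum_sq_diffSumRotation_inl]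
    gcongr
  have htotal :
      ∑ i, diffSumRotation p (.inl i) ^ 2 + ∑ i, diffSumRotation p (.inr i) ^ 2 = 1 := by
    rw [← Fintype.sum_sum_type (f := fun k => diffSumRotation p k ^ 2),
      ← EuclideanSpace.real_norm_sq_eq, norm_diffSumRotation, hp, one_pow]
  refine ⟨by nlinarith, fun k => ?_⟩
  rcases k with i | i
  · refine abs_le_of_sq_le_sq ?_ hρ.le
    calc diffSumRotation p (.inl i) ^ 2 ≤ ∑ i, diffSumRotation p (.inl i) ^ 2 :=
          Finset.single_le_sum (f := fun i => diffSumRotation p (.inl i) ^ 2)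
            (fun i _ => sq_nonneg _) (Finset.mem_univ i)
      _ ≤ ρ ^ 2 := by linarith [sq_nonneg ρ]
  · simpa [norm_diffSumRotation, hp] using PiLp.norm_apply_le (diffSumRotation p) (.inr i)

theorem exists_hausdorffMeasure_sphere_le (κ : Type*) [Fintype κ] :
    ∃ M : ℝ≥0, μH[(Fintype.card κ : ℝ) - 1] (sphere (0 : EuclideanSpace ℝ κ) 1) ≤ M := by
  classical
  obtain ⟨K, hK⟩ := exists_hausdorffMeasure_le_of_subset_sphere (κ := κ)
  refine ⟨K * Fintype.card κ, (hK Finset.univ (fun _ => 1) _ subset_rfl ?_ ?_).trans_eq ?_⟩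
  · intro p hp
    rw [← EuclideanSpace.real_norm_sq_eq, mem_sphere_zero_iff_norm.1 hp]
    norm_num
  · intro p hp k
    simpa [mem_sphere_zero_iff_norm.1 hp] using PiLp.norm_apply_le p k
  · simp

theorem exists_hausdorffMeasure_sphere_inter_band_le {d : ℕ} (hd : 1 ≤ d) :
    ∃ K : ℝ≥0, ∀ ρ : ℝ, 0 < ρ → ρ ≤ 1 →
      μH[2 * (d : ℝ) - 1] (sphere (0 : EuclideanSpace ℝ (Fin d ⊕ Fin d)) 1 ∩
        {p | ‖projL p - projR p‖ ≤ ρ}) ≤ K * ENNReal.ofReal ρ ^ d := by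
  obtain ⟨K, hK⟩ := exists_hausdorffMeasure_le_of_subset_sphere (κ := Fin d ⊕ Fin d)
  have hdim : (Fintype.card (Fin d ⊕ Fin d) : ℝ) - 1 = 2 * d - 1 := by simp; ring
  rw [hdim] at hK
  have hd' : (1 : ℝ) ≤ d := by exact_mod_cast hd
  refine ⟨K * d, fun ρ hρ hρ1 => ?_⟩
  rw [← isometry_diffSumRotation.hausdorffMeasure_image (Or.inl (by linarith))]
  refine (hK (Finset.univ.map .inr) (Sum.elim (fun _ => ρ) fun _ => 1) _ ?_ ?_ ?_).trans_eq ?_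
  · rintro _ ⟨p, ⟨hp, -⟩, rfl⟩
    simpa [norm_diffSumRotation] using hp
  · rintro _ ⟨p, ⟨hp, hpρ⟩, rfl⟩
    simpa using (diffSumRotation_band_bounds hρ hρ1 (by simpa using hp) hpρ).1
  · rintro _ ⟨p, ⟨hp, hpρ⟩, rfl⟩
    exact (diffSumRotation_band_bounds hρ hρ1 (by simpa using hp) hpρ).2
  · simp [Finset.prod_erase, Fintype.prod_sum_type, mul_assoc]

theorem pow_le_min_one_rpow {ρ : ℝ} (hρ : 0 < ρ) (hρ1 : ρ ≤ 1) (d : ℕ) :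
    ρ ^ d ≤ min 1 (ρ ^ (((d : ℝ) - 1) / 2)) := by
  refine le_min (pow_le_one₀ hρ.le hρ1) ?_
  rw [← Real.rpow_natCast]
  exact Real.rpow_le_rpow_of_exponent_ge hρ hρ1 (by linarith [(d.cast_nonneg : (0 : ℝ) ≤ d)])

theorem stmt_6 (d : ℕ) (hd : 2 ≤ d) :
    ∃ C > 0, ∀ ρ : ℝ, 0 < ρ →
      μH[2 * (d : ℝ) - 1] (Metric.sphere (0 : EuclideanSpace ℝ (Fin d ⊕ Fin d)) 1 ∩
            {p | ‖projL p - projR p‖ ≤ ρ})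
          ≤ ENNReal.ofReal (C * min 1 (ρ ^ (((d : ℝ) - 1) / 2))) := by
  obtain ⟨K, hK⟩ := exists_hausdorffMeasure_sphere_inter_band_le (d := d) (by omega)
  obtain ⟨M, hM⟩ := exists_hausdorffMeasure_sphere_le (Fin d ⊕ Fin d)
  have hdim : (Fintype.card (Fin d ⊕ Fin d) : ℝ) - 1 = 2 * d - 1 := by simp; ring
  rw [hdim] at hM
  refine ⟨K + M + 1, by positivity, fun ρ hρ => ?_⟩
  rcases le_or_gt ρ 1 with hρ1 | hρ1
  · calc _ ≤ K * ENNReal.ofReal ρ ^ d := hK ρ hρ hρ1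
      _ = ENNReal.ofReal (K * ρ ^ d) := by
        rw [ENNReal.ofReal_mul K.coe_nonneg, ENNReal.ofReal_coe_nnreal, ENNReal.ofReal_pow hρ.le]
      _ ≤ _ := by
        gcongr
        · linarith [M.coe_nonneg]
        · exact pow_le_min_one_rpow hρ hρ1 d
  · have hd' : (2 : ℝ) ≤ d := by exact_mod_cast hd
    have hmin : min 1 (ρ ^ (((d : ℝ) - 1) / 2)) = 1 :=
      min_eq_left (Real.one_le_rpow hρ1.le (by linarith))
    calc _ ≤ μH[2 * (d : ℝ) - 1] (sphere 0 1) := measure_mono inter_subset_left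
      _ ≤ M := hM
      _ ≤ _ := by
        rw [hmin, mul_one, ← ENNReal.ofReal_coe_nnreal]
        gcongr
        linarith [K.coe_nonneg]
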